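/- For $x \in \mathbb{R}^3$ with $|x| > 8$, the integral $I(x) := \int_0^1 \int_{\mathbb{R}^3} \frac{1}{(|x-y| + \sqrt{1-s})^4} \cdot \frac{1}{(|y| + \sqrt{s})^3} \, dy \, ds$ satisfies $I(x) \le C |x|^{-3}$ for an absolute constant $C$. -/

import Mathlib

open MeasureTheory Real
noncomputable section
abbrev E3 := EuclideanSpace ℝ (Fin 3)
/-- partial derivative in direction `j` -/
def pd (j : Fin 3) (f : E3 → ℝ) (x : E3) : ℝ := fderiv ℝ f x (EuclideanSpace.single j 1)
/-- divergence of a vector field -/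
def vdiv (v : E3 → E3) (x : E3) : ℝ := ∑ j, pd j (fun y => v y j) x
/-- componentwise Laplacian (on scalars) -/
def lap (f : E3 → ℝ) (x : E3) : ℝ := ∑ j, pd j (pd j f) x
/-- curl of a vector field on ℝ³ -/
def curl (v : E3 → E3) (x : E3) : E3 :=
  WithLp.toLp 2 ![pd 1 (fun y => v y 2) x - pd 2 (fun y => v y 1) x,
    pd 2 (fun y => v y 0) x - pd 0 (fun y => v y 2) x,
    pd 0 (fun y => v y 1) x - pd 1 (fun y => v y 0) x]
/-- Gaussian heat kernel with diffusivity `c` -/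
def heatKernel (c t : ℝ) (x : E3) : ℝ :=
  (4 * Real.pi * c * t) ^ (-(3:ℝ)/2) * Real.exp (-‖x‖^2 / (4 * c * t))
/-- the weak-`L^p` quasinorm on ℝ³ -/
def wnorm3 (p : ℝ) (g : E3 → ℝ) : ℝ :=
  sSup {a : ℝ | ∃ γ : ℝ, 0 < γ ∧ a = γ * (volume {x : E3 | γ < |g x|}).toReal ^ p⁻¹}

open Set Metric Module

/-! Split the inner integral at `‖y‖ = ‖x‖ / 2`. On the ball, `‖x - y‖ ≥ ‖x‖ / 2` and
`(‖y‖ + √s)⁻³ ≤ (√s)⁻¹ (‖y‖ + √s)⁻²`, and in polar coordinates `∫_{‖y‖ < ρ} (‖y‖ + √s)⁻² dy = O(ρ)`.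
Off the ball, `(‖y‖ + √s)⁻³ ≤ 8 ‖x‖⁻³`, and scaling `z = a • w` gives
`∫ (‖z‖ + a)⁻⁴ dz = a⁻¹ ∫ (‖w‖ + 1)⁻⁴ dw` with `a = √(1 - s)`. So the inner integral is
`O(‖x‖⁻³ ((√s)⁻¹ + (√(1 - s))⁻¹))`, which is integrable in `s`. -/

theorem kernel_mul_source_le {E : Type*} [NormedAddCommGroup E] {x : E} (hx : x ≠ 0) (y : E)
    {a b : ℝ} (ha : 0 < a) (hb : 0 < b) {k n : ℕ} (hn : 1 ≤ n) :
    ((‖x - y‖ + a) ^ k)⁻¹ * ((‖y‖ + b) ^ n)⁻¹ ≤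
      (ball 0 (‖x‖ / 2)).indicator
          (fun y => ((‖x‖ / 2) ^ k)⁻¹ * b⁻¹ * ((‖y‖ + b) ^ (n - 1))⁻¹) y
        + ((‖x‖ / 2) ^ n)⁻¹ * ((‖x - y‖ + a) ^ k)⁻¹ := by
  have hx_pos : 0 < ‖x‖ := norm_pos_iff.2 hx
  have htri := norm_sub_norm_le x y
  by_cases hy : y ∈ ball (0 : E) (‖x‖ / 2)
  · rw [mem_ball_zero_iff] at hy
    have hsource : ((‖y‖ + b) ^ n)⁻¹ ≤ b⁻¹ * ((‖y‖ + b) ^ (n - 1))⁻¹ := by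
      rw [← mul_inv]
      conv_lhs => rw [← Nat.sub_add_cancel hn, pow_succ']
      gcongr
      linarith [norm_nonneg y]
    rw [indicator_of_mem (mem_ball_zero_iff.2 hy), mul_assoc]
    refine le_add_of_le_of_nonneg (mul_le_mul ?_ hsource (by positivity) (by positivity))
      (by positivity)
    gcongr
    linarith
  · rw [mem_ball_zero_iff, not_lt] at hy
    rw [indicator_of_notMem (by simpa using hy), zero_add, mul_comm]
    gcongr
    linarith [norm_nonneg y]

section HaarMeasure

variable {E : Type*} [NormedAddCommGroup E] [NormedSpace ℝ E] [FiniteDimensional ℝ E]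
  [MeasurableSpace E] [BorelSpace E] (μ : Measure E) [μ.IsAddHaarMeasure]

theorem integral_inv_norm_add_pow_finrank_succ {a : ℝ} (ha : 0 < a) :
    ∫ z, ((‖z‖ + a) ^ (finrank ℝ E + 1))⁻¹ ∂μ
      = a⁻¹ * ∫ z, ((‖z‖ + 1) ^ (finrank ℝ E + 1))⁻¹ ∂μ := by
  have hscale :=
    Measure.integral_comp_smul μ (fun z : E => ((‖z‖ + a) ^ (finrank ℝ E + 1))⁻¹) a
  have hsmul (z : E) : ‖a • z‖ + a = a * (‖z‖ + 1) := by
    rw [norm_smul, Real.norm_of_nonneg ha.le]; ring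
  simp only [hsmul, mul_pow, mul_inv, integral_const_mul, abs_inv, abs_pow, abs_of_pos ha,
    smul_eq_mul] at hscale
  rw [eq_inv_mul_iff_mul_eq₀ (by positivity)] at hscale
  rw [← hscale, pow_succ]
  field_simp

theorem integrable_inv_norm_add_pow {a : ℝ} (ha : 0 < a) {n : ℕ} (hn : finrank ℝ E < n) :
    Integrable (fun z : E => ((‖z‖ + a) ^ n)⁻¹) μ := by
  have hmin : 0 < min a 1 := lt_min ha one_pos
  refine ((integrable_one_add_norm (μ := μ) (r := n) (by exact_mod_cast hn)).const_mul
    ((min a 1 ^ n)⁻¹)).mono' (by fun_prop) (.of_forall fun z => ?_)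
  rw [Real.norm_of_nonneg (by positivity), Real.rpow_neg (by positivity), Real.rpow_natCast,
    ← mul_inv, ← mul_pow]
  gcongr
  nlinarith [min_le_left a 1, min_le_right a 1, norm_nonneg z]

theorem setIntegral_ball_fun_norm_le [Nontrivial E] {f : ℝ → ℝ}
    (hf : ∀ r, 0 < r → ‖r ^ (finrank ℝ E - 1) * f r‖ ≤ 1) {ρ : ℝ} (hρ : 0 ≤ ρ) :
    ∫ y in ball (0 : E) ρ, f ‖y‖ ∂μ ≤ finrank ℝ E * μ.real (ball 0 1) * ρ := by
  have hradial : ∫ y in ball (0 : E) ρ, f ‖y‖ ∂μ = finrank ℝ E * μ.real (ball 0 1) *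
      ∫ r in Ioo 0 ρ, r ^ (finrank ℝ E - 1) * f r := by
    have hind (y : E) :
        (ball 0 ρ).indicator (fun y => f ‖y‖) y = (Iio ρ).indicator f ‖y‖ := by
      by_cases hy : ‖y‖ < ρ <;> simp [hy]
    have hind' (r : ℝ) : r ^ (finrank ℝ E - 1) • (Iio ρ).indicator f r
        = (Iio ρ).indicator (fun r => r ^ (finrank ℝ E - 1) * f r) r := by
      by_cases hr : r ∈ Iio ρ <;> simp [hr]
    rw [← integral_indicator measurableSet_ball, funext hind, integral_fun_norm_addHaar,
      funext hind', setIntegral_indicator measurableSet_Iio, Ioi_inter_Iio]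
    simp [mul_assoc]
  have hshell : ∫ r in Ioo 0 ρ, r ^ (finrank ℝ E - 1) * f r ≤ ρ := by
    refine (le_abs_self _).trans ((norm_setIntegral_le_of_norm_le_const measure_Ioo_lt_top
      fun r hr => hf r hr.1).trans_eq ?_)
    simp [hρ]
  rw [hradial]
  gcongr

theorem integral_kernel_mul_source_le [Nontrivial E] {x : E} (hx : x ≠ 0) {a b : ℝ}
    (ha : 0 < a) (hb : 0 < b) :
    ∫ y, ((‖x - y‖ + a) ^ (finrank ℝ E + 1))⁻¹ * ((‖y‖ + b) ^ finrank ℝ E)⁻¹ ∂μ ≤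
      (2 / ‖x‖) ^ finrank ℝ E * (finrank ℝ E * μ.real (ball 0 1) * b⁻¹
        + (∫ z, ((‖z‖ + 1) ^ (finrank ℝ E + 1))⁻¹ ∂μ) * a⁻¹) := by
  set n := finrank ℝ E
  set ρ := ‖x‖ / 2 with hρ
  have hρ_pos : 0 < ρ := by positivity
  have hball : IntegrableOn (fun y : E => ((‖y‖ + b) ^ (n - 1))⁻¹) (ball 0 ρ) μ := by
    refine Measure.integrableOn_of_bounded (M := (b ^ (n - 1))⁻¹) measure_ball_lt_top.ne
      (by fun_prop) (.of_forall fun y => ?_)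
    rw [Real.norm_of_nonneg (by positivity)]
    gcongr
    linarith [norm_nonneg y]
  have hnear : Integrable ((ball 0 ρ).indicator
      (fun y => (ρ ^ (n + 1))⁻¹ * b⁻¹ * ((‖y‖ + b) ^ (n - 1))⁻¹)) μ :=
    IntegrableOn.integrable_indicator (Integrable.const_mul hball _) measurableSet_ball
  have hfar : Integrable (fun y => ((‖x - y‖ + a) ^ (n + 1))⁻¹) μ :=
    (integrable_inv_norm_add_pow μ ha (Nat.lt_succ_self n)).comp_sub_left x
  have hshell :
      ∫ y in ball (0 : E) ρ, ((‖y‖ + b) ^ (n - 1))⁻¹ ∂μ ≤ n * μ.real (ball 0 1) * ρ := by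
    refine setIntegral_ball_fun_norm_le μ (f := fun r => ((r + b) ^ (n - 1))⁻¹)
      (fun r hr => ?_) hρ_pos.le
    rw [Real.norm_of_nonneg (by positivity), ← div_eq_mul_inv, ← div_pow]
    exact pow_le_one₀ (by positivity) ((div_le_one (by positivity)).2 (by linarith))
  calc ∫ y, ((‖x - y‖ + a) ^ (n + 1))⁻¹ * ((‖y‖ + b) ^ n)⁻¹ ∂μ
      ≤ ∫ y, ((ball 0 ρ).indicator
            (fun y => (ρ ^ (n + 1))⁻¹ * b⁻¹ * ((‖y‖ + b) ^ (n - 1))⁻¹) y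
          + (ρ ^ n)⁻¹ * ((‖x - y‖ + a) ^ (n + 1))⁻¹) ∂μ :=
        integral_mono_of_nonneg (.of_forall fun y => by positivity)
          (hnear.add (hfar.const_mul _))
          (.of_forall fun y => kernel_mul_source_le hx y ha hb Module.finrank_pos)
    _ = (ρ ^ (n + 1))⁻¹ * b⁻¹ * ∫ y in ball 0 ρ, ((‖y‖ + b) ^ (n - 1))⁻¹ ∂μ
          + (ρ ^ n)⁻¹ * ∫ z, ((‖z‖ + a) ^ (n + 1))⁻¹ ∂μ := by
        rw [integral_add hnear (hfar.const_mul _), integral_indicator measurableSet_ball,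
          integral_const_mul, integral_const_mul,
          integral_sub_left_eq_self (fun z => ((‖z‖ + a) ^ (n + 1))⁻¹) μ x]
    _ ≤ (ρ ^ (n + 1))⁻¹ * b⁻¹ * (n * μ.real (ball 0 1) * ρ)
          + (ρ ^ n)⁻¹ * (a⁻¹ * ∫ z, ((‖z‖ + 1) ^ (n + 1))⁻¹ ∂μ) := by
        rw [integral_inv_norm_add_pow_finrank_succ μ ha]
        gcongr
    _ = _ := by
        have hscale : (2 / ‖x‖) ^ n = (ρ ^ n)⁻¹ := by rw [hρ, ← inv_pow, inv_div]
        generalize ∫ z, ((‖z‖ + 1) ^ (n + 1))⁻¹ ∂μ = K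
        rw [hscale, pow_succ]
        field_simp

end HaarMeasure

theorem intervalIntegrable_inv_sqrt : IntervalIntegrable (fun s : ℝ => (√s)⁻¹) volume 0 1 :=
  (intervalIntegral.intervalIntegrable_rpow' (r := -(1 / 2)) (by norm_num)).congr_uIoo
    fun s hs => by
      rw [uIoo_of_le zero_le_one] at hs
      simp only [sqrt_eq_rpow, rpow_neg hs.1.le]

theorem integral_inv_sqrt : ∫ s in (0 : ℝ)..1, (√s)⁻¹ = 2 := by
  rw [intervalIntegral.integral_congr_Ioo_of_le zero_le_one (g := fun s => s ^ (-(1 / 2) : ℝ))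
    fun s hs => by simp only [sqrt_eq_rpow, rpow_neg hs.1.le], integral_rpow (Or.inl (by norm_num))]
  norm_num

theorem intervalIntegrable_inv_sqrt_one_sub :
    IntervalIntegrable (fun s : ℝ => (√(1 - s))⁻¹) volume 0 1 := by
  simpa using (intervalIntegrable_inv_sqrt.comp_sub_left 1).symm

theorem integral_inv_sqrt_one_sub : ∫ s in (0 : ℝ)..1, (√(1 - s))⁻¹ = 2 := by
  rw [intervalIntegral.integral_comp_sub_left (fun s => (√s)⁻¹) 1, sub_self, sub_zero,
    integral_inv_sqrt]

theorem integrableOn_inv_sqrt_add_inv_sqrt_one_sub (A B : ℝ) :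
    IntegrableOn (fun s => A * (√s)⁻¹ + B * (√(1 - s))⁻¹) (Ioo 0 1) := by
  have h := (intervalIntegrable_inv_sqrt.const_mul A).add
    (intervalIntegrable_inv_sqrt_one_sub.const_mul B)
  rw [intervalIntegrable_iff_integrableOn_Ioo_of_le zero_le_one] at h
  exact h

theorem setIntegral_inv_sqrt_add_inv_sqrt_one_sub (A B : ℝ) :
    ∫ s in Ioo 0 1, (A * (√s)⁻¹ + B * (√(1 - s))⁻¹) = 2 * (A + B) := by
  rw [← integral_Ioc_eq_integral_Ioo, ← intervalIntegral.integral_of_le zero_le_one,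
    intervalIntegral.integral_add (intervalIntegrable_inv_sqrt.const_mul A)
      (intervalIntegrable_inv_sqrt_one_sub.const_mul B),
    intervalIntegral.integral_const_mul, intervalIntegral.integral_const_mul, integral_inv_sqrt,
    integral_inv_sqrt_one_sub]
  ring

theorem stmt13 :
    ∃ C : ℝ, 0 < C ∧ ∀ x : E3, 8 < ‖x‖ →
      (∫ s in Set.Ioo (0:ℝ) 1, ∫ y : E3,
          ((‖x - y‖ + Real.sqrt (1 - s)) ^ 4)⁻¹ * ((‖y‖ + Real.sqrt s) ^ 3)⁻¹)
        ≤ C * ‖x‖ ^ (-(3:ℝ)) := by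
  set V := (volume : Measure E3).real (ball 0 1)
  set K := ∫ z : E3, ((‖z‖ + 1) ^ 4)⁻¹
  have hV : 0 < V :=
    ENNReal.toReal_pos (measure_ball_pos volume 0 one_pos).ne' measure_ball_lt_top.ne
  have hK : 0 ≤ K := integral_nonneg fun z => by positivity
  refine ⟨16 * (3 * V + K), by positivity, fun x hx => ?_⟩
  have hx0 : x ≠ 0 := norm_pos_iff.1 (by linarith)
  have hinner : ∀ s ∈ Ioo (0 : ℝ) 1,
      ∫ y : E3, ((‖x - y‖ + √(1 - s)) ^ 4)⁻¹ * ((‖y‖ + √s) ^ 3)⁻¹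
        ≤ (2 / ‖x‖) ^ 3 * (3 * V * (√s)⁻¹ + K * (√(1 - s))⁻¹) := fun s hs => by
    simpa [finrank_euclideanSpace] using integral_kernel_mul_source_le (volume : Measure E3) hx0
      (sqrt_pos.2 (sub_pos.2 hs.2)) (sqrt_pos.2 hs.1)
  calc _ ≤ ∫ s in Ioo 0 1, (2 / ‖x‖) ^ 3 * (3 * V * (√s)⁻¹ + K * (√(1 - s))⁻¹) :=
        integral_mono_of_nonneg (.of_forall fun s => integral_nonneg fun y => by positivity)
          ((integrableOn_inv_sqrt_add_inv_sqrt_one_sub _ _).const_mul _)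
          (ae_restrict_of_forall_mem measurableSet_Ioo hinner)
    _ = 16 * (3 * V + K) * ‖x‖ ^ (-(3 : ℝ)) := by
        rw [integral_const_mul, setIntegral_inv_sqrt_add_inv_sqrt_one_sub,
          rpow_neg (norm_nonneg x), rpow_ofNat]
        field_simp
        ring
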